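/- Let M be an admissible matroid on J, let L(M) be its lattice of flats ordered by inclusion (with bottom element the empty flat), and let μ denote the Möbius function of L(M). Then for every a ∈ J and every natural number k: the sum of μ(∅, F) over all admissible flats F of M of rank k with a ∈ F equals the sum of μ(∅, F) over all admissible flats F of M of rank k with a* ∈ F. -/

import Mathlib

open Set Matroid
open scoped Matroid

open scoped Classical

/-- The ground set `J = [n] ⊔ [n]*`: `Sum.inl` is `[n]`, `Sum.inr` is `[n]*`. -/
abbrev J (n : ℕ) := Fin n ⊕ Fin n

/-- The fixed-point-free involution `a ↦ a*` on `J n`. -/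
def sstar {n : ℕ} (a : J n) : J n := Sum.swap a

/-- `A* = {a* : a ∈ A}`. -/
def starSet {n : ℕ} (A : Set (J n)) : Set (J n) := sstar '' A

/-- `A` is admissible if `A ∩ A* = ∅`. -/
def Admissible {n : ℕ} (A : Set (J n)) : Prop := A ∩ starSet A = ∅

/-- `A` is totally inadmissible if `A* = A`. -/
def TotallyInadmissible {n : ℕ} (A : Set (J n)) : Prop := starSet A = A

/-- The rank of a set in a matroid (on a finite ground type). -/
noncomputable def Matroid.rSet {α : Type*} (M : Matroid α) (A : Set α) : ℕ :=
  sSup {k : ℕ | ∃ I, M.Indep I ∧ I ⊆ A ∧ I.ncard = k}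

/-- The rank of a matroid. -/
noncomputable def Matroid.rnk {α : Type*} (M : Matroid α) : ℕ := M.rSet M.E

/-- A loopless matroid: every singleton of the ground set is independent. -/
def Matroid.LooplessM {α : Type*} (M : Matroid α) : Prop := ∀ a ∈ M.E, M.Indep {a}

/-- `I^ad M`: the independent sets of `M` whose closure is admissible. -/
def Iad {n : ℕ} (M : Matroid (J n)) : Set (Set (J n)) :=
  {I | M.Indep I ∧ Admissible (M.closure I)}

/-- An admissible matroid on `J n`. -/
def IsAdmissibleMatroid {n : ℕ} (M : Matroid (J n)) : Prop :=
  M.E = Set.univ ∧ M.LooplessM ∧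
    ∀ A : Set (J n),
      M.rSet A = sSup {v : ℕ | ∃ I : Set (J n), M.Indep I ∧ Admissible I ∧ I ⊆ A ∧
        v = if ∃ a, a ∈ A ∧ sstar a ∈ A ∧ (I ∪ {a}) ∈ Iad M ∧ (I ∪ {sstar a}) ∈ Iad M
            then I.ncard + 2 else I.ncard}

/-- Strongly admissible sets with respect to `M`. -/
inductive StronglyAdmissible {n : ℕ} (M : Matroid (J n)) : Set (J n) → Prop
  | empty : StronglyAdmissible M ∅
  | insert {B : Set (J n)} {a : J n} : StronglyAdmissible M B →
      a ∉ M.closure B → sstar a ∉ M.closure B → StronglyAdmissible M (Insert.insert a B)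

/-- The Möbius function of a finite poset, valued in `ℤ`. -/
noncomputable def mob {α : Type*} [PartialOrder α] [Fintype α] (x y : α) : ℤ :=
  letI : DecidableEq α := Classical.decEq α
  letI : @DecidableRel α α (· < ·) := Classical.decRel _
  letI : @DecidableRel α α (· ≤ ·) := Classical.decRel _
  letI := Fintype.toLocallyFiniteOrder (α := α)
  IncidenceAlgebra.mu ℤ x y

/-- The lattice of flats of the ranked symplectic matroid associated to `M`:
admissible flats of `M` together with the ground set as top element. -/
abbrev LS {n : ℕ} (M : Matroid (J n)) :=
  {F : Set (J n) // (M.IsFlat F ∧ Admissible F) ∨ F = M.E}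

/-- The Möbius number `μ(S(M))` of the lattice of flats of the ranked symplectic matroid. -/
noncomputable def muS {n : ℕ} (M : Matroid (J n)) : ℤ :=
  if h : M.IsFlat ∅ ∧ Admissible (∅ : Set (J n)) then
    mob (⟨∅, Or.inl h⟩ : LS M) ⟨M.E, Or.inr rfl⟩
  else 0

/-- The Möbius function of the lattice of flats of `M`. -/
noncomputable def muFlats {n : ℕ} (M : Matroid (J n)) (F G : Set (J n)) : ℤ :=
  if h : M.IsFlat F ∧ M.IsFlat G then
    mob (⟨F, h.1⟩ : {X : Set (J n) // M.IsFlat X}) ⟨G, h.2⟩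
  else 0

/-- Matroid deletion. -/
def Matroid.del {α : Type*} (M : Matroid α) (D : Set α) : Matroid α := M ↾ (M.E \ D)

/-- Matroid contraction, via the dual. -/
def Matroid.con {α : Type*} (M : Matroid α) (C : Set α) : Matroid α := (M✶ ↾ (M✶.E \ C))✶

/-- A circuit: a minimal dependent subset of the ground set. -/
def Matroid.Circuit' {α : Type*} (M : Matroid α) (C : Set α) : Prop :=
  C ⊆ M.E ∧ ¬ M.Indep C ∧ ∀ D, D ⊂ C → M.Indep D

/-- Connectedness of a matroid: nonempty ground set and any two elements lie
in a common circuit. -/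
def Matroid.ConnectedM {α : Type*} (M : Matroid α) : Prop :=
  M.E.Nonempty ∧ ∀ a ∈ M.E, ∀ b ∈ M.E, a = b ∨ ∃ C, M.Circuit' C ∧ a ∈ C ∧ b ∈ C

/-- The 0/1-indicator vector of `B ⊆ J` in `ℝ^J`. -/
noncomputable def indic {n : ℕ} (B : Set (J n)) : J n → ℝ := fun a => if a ∈ B then 1 else 0

/-- The enveloping map `env : ℝ^J → ℝ^n`, `(env x)_i = x_i - x_{i*}`. -/
def envMap {n : ℕ} (x : J n → ℝ) : Fin n → ℝ := fun i => x (Sum.inl i) - x (Sum.inr i)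

/-- `e±_A ∈ ℝ^n`: `+1` on coordinates `i ∈ A`, `-1` on coordinates with `i* ∈ A`, `0` otherwise. -/
noncomputable def epm {n : ℕ} (A : Set (J n)) : Fin n → ℝ := envMap (indic A)

/-- The matroid polytope `P(S(M))` of the ranked symplectic matroid of `M`. -/
noncomputable def PolyS {n : ℕ} (M : Matroid (J n)) : Set (Fin n → ℝ) :=
  convexHull ℝ (epm '' {B | M.IsBase B ∧ Admissible B})

/-- The support of the Bergman fan of the ranked symplectic matroid of `M`. -/
def Berg {n : ℕ} (M : Matroid (J n)) : Set (Fin n → ℝ) :=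
  {ω | ∃ C : Finset (Set (J n)),
    (∀ F ∈ C, M.IsFlat F ∧ Admissible F ∧ F ≠ ∅) ∧
    (∀ F ∈ C, ∀ G ∈ C, F ⊆ G ∨ G ⊆ F) ∧
    ∃ a : Set (J n) → ℝ, (∀ F, 0 ≤ a F) ∧ ω = ∑ F ∈ C, a F • epm F}

/-- A maximal chain `F₁ ⊊ ⋯ ⊊ F_d` of proper flats of the lattice of flats of `S(M)`,
where `rank_M (F i) = i + 1`. -/
def IsFlagChain {n : ℕ} (M : Matroid (J n)) (d : ℕ) (F : Fin d → Set (J n)) : Prop :=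
  (∀ i, M.IsFlat (F i) ∧ Admissible (F i) ∧ M.rSet (F i) = (i : ℕ) + 1) ∧
    ∀ i j : Fin d, i < j → F i ⊂ F j

/-- A Minkowski weight of dimension `d` on the Bergman fan of `S(M)`. -/
def IsMinkowskiWeight {n : ℕ} (M : Matroid (J n)) (d : ℕ)
    (c : (Fin d → Set (J n)) → ℤ) : Prop :=
  ∀ (σ : Fin d → Set (J n)) (k : Fin d), IsFlagChain M d σ →
    (∑ G ∈ Finset.univ.filter
        (fun G : Set (J n) => IsFlagChain M d (Function.update σ k G)),
        (c (Function.update σ k G) : ℝ) • epm G)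
      ∈ Submodule.span ℝ {v : Fin n → ℝ | ∃ i : Fin d, i ≠ k ∧ v = epm (σ i)}

/-- The top (rank `d`) flat of a maximal chain. -/
def chainTop {n d : ℕ} (σ : Fin d → Set (J n)) : Set (J n) := ⋃ i, σ i

/-!
Weisner's theorem in the lattice of flats, for the atom `cl {b}`, gives
`μ(∅, F) = -∑ μ(∅, x)` over the flats `x ∌ b` with `cl (x ∪ b) = F`. Summing over the admissible
flats `F ∋ b` of rank `k` turns the left-hand side into `-∑ μ(∅, x)` over the flats `x` of rank
`k - 1` with `b ∉ x` and `cl (x ∪ b)` admissible, and this condition is invariant under `b ↦ b*`.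
Indeed, if `cl (x ∪ a)` is admissible then `x ∪ {a, a*}` has rank `r(x) + 2`; by the admissible
rank axiom this rank is attained by an admissible independent set, which has at most `r(x) + 1`
elements there, so it must collect the bonus `2` of the pair `{a, a*}`, and that bonus says
precisely that `cl (x ∪ a*)` is admissible.
-/

section Involution

variable {n : ℕ}

lemma sstar_involutive : Function.Involutive (sstar (n := n)) := Sum.swap_swap

lemma sstar_sstar (a : J n) : sstar (sstar a) = a := sstar_involutive a

lemma admissible_iff {A : Set (J n)} : Admissible A ↔ ∀ b ∈ A, sstar b ∉ A := by
  simp only [Admissible, starSet, Set.eq_empty_iff_forall_notMem, Set.mem_inter_iff,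
    Set.mem_image, not_and, not_exists]
  refine ⟨fun h b hb hb' => h (sstar b) hb' b hb (sstar_sstar b ▸ rfl), ?_⟩
  rintro h _ hc b hb rfl
  exact h b hb hc

lemma Admissible.sstar_notMem {A : Set (J n)} (h : Admissible A) {b : J n}
    (hb : b ∈ A) : sstar b ∉ A :=
  admissible_iff.1 h b hb

lemma Admissible.subset {A B : Set (J n)} (hB : Admissible B) (h : A ⊆ B) :
    Admissible A :=
  admissible_iff.2 fun _ hb hb' => hB.sstar_notMem (h hb) (h hb')

lemma Admissible.eq_sstar_or_eq_of_mem_insert_insert {x : Set (J n)} (hx : Admissible x)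
    {a b : J n} (ha : a ∉ x) (ha' : sstar a ∉ x) (hb : b ∈ insert (sstar a) (insert a x))
    (hb' : sstar b ∈ insert (sstar a) (insert a x)) : b = sstar a ∨ b = a := by
  rcases hb with hb | hb | hbx
  · exact Or.inl hb
  · exact Or.inr hb
  · exfalso
    rcases hb' with h | h | h
    · exact ha (sstar_involutive.injective h ▸ hbx)
    · exact ha' (sstar_involutive.eq_iff.1 h ▸ hbx)
    · exact hx.sstar_notMem hbx h

lemma admissible_empty : Admissible (∅ : Set (J n)) :=
  admissible_iff.2 fun _ hb => hb.elim

end Involution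

namespace Matroid

lemma LooplessM.isFlat_empty {α : Type*} {M : Matroid α} (hM : M.LooplessM) :
    M.IsFlat ∅ := by
  refine isFlat_iff_closure_eq.2 (Set.eq_empty_of_forall_notMem fun e he => ?_)
  have hloop : M.IsLoop e := he
  exact hloop.dep.not_indep (hM e hloop.mem_ground)

variable {α : Type*} [Finite α] {M : Matroid α} {I X : Set α} {e : α}

lemma rSet_eq_eRk (M : Matroid α) (X : Set α) : (M.rSet X : ℕ∞) = M.eRk X := by
  obtain ⟨I, hI⟩ := M.exists_isBasis' X
  have hmax : IsGreatest {k : ℕ | ∃ I, M.Indep I ∧ I ⊆ X ∧ I.ncard = k} I.ncard := by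
    refine ⟨⟨I, hI.indep, hI.subset, rfl⟩, ?_⟩
    rintro _ ⟨K, hK, hKX, rfl⟩
    rw [← Nat.cast_le (α := ℕ∞), K.toFinite.cast_ncard_eq, I.toFinite.cast_ncard_eq,
      hI.encard_eq_eRk]
    exact hK.encard_le_eRk_of_subset hKX
  rw [rSet, hmax.csSup_eq, I.toFinite.cast_ncard_eq, hI.encard_eq_eRk]

lemma Indep.ncard_le_rSet (hI : M.Indep I) (hIX : I ⊆ X) : I.ncard ≤ M.rSet X := by
  rw [← Nat.cast_le (α := ℕ∞), rSet_eq_eRk, I.toFinite.cast_ncard_eq]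
  exact hI.encard_le_eRk_of_subset hIX

lemma rSet_closure (M : Matroid α) (X : Set α) : M.rSet (M.closure X) = M.rSet X := by
  rw [← Nat.cast_inj (R := ℕ∞), rSet_eq_eRk, rSet_eq_eRk, eRk_closure_eq]

lemma rSet_insert_le (M : Matroid α) (e : α) (X : Set α) :
    M.rSet (insert e X) ≤ M.rSet X + 1 := by
  rw [← Nat.cast_le (α := ℕ∞), Nat.cast_add, rSet_eq_eRk, rSet_eq_eRk, Nat.cast_one]
  exact M.eRk_insert_le_add_one e X

lemma rSet_insert_of_notMem_closure (he : e ∈ M.E \ M.closure X) :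
    M.rSet (insert e X) = M.rSet X + 1 := by
  rw [← Nat.cast_inj (R := ℕ∞), Nat.cast_add, rSet_eq_eRk, rSet_eq_eRk, Nat.cast_one]
  exact eRk_insert_eq_add_one he

lemma IsFlat.rSet_closure_insert (hX : M.IsFlat X) (he : e ∈ M.E) (heX : e ∉ X) :
    M.rSet (M.closure (insert e X)) = M.rSet X + 1 := by
  rw [rSet_closure, rSet_insert_of_notMem_closure ⟨he, by rwa [hX.closure]⟩]

lemma Indep.closure_eq_of_rSet_le (hI : M.Indep I) (hIX : I ⊆ X) (h : M.rSet X ≤ I.ncard) :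
    M.closure I = M.closure X := by
  refine (hI.isBasis'_of_eRk_ge I.toFinite hIX ?_).closure_eq_closure
  rw [← rSet_eq_eRk, ← rSet_eq_eRk, Nat.cast_le]
  exact h.trans (hI.ncard_le_rSet subset_rfl)

end Matroid

section AdmissibleMatroid

variable {n : ℕ} {M : Matroid (J n)}

lemma IsAdmissibleMatroid.exists_indep_rSet_eq (hM : IsAdmissibleMatroid M) (A : Set (J n)) :
    M.rSet A ∈ {v : ℕ | ∃ I : Set (J n), M.Indep I ∧ Admissible I ∧ I ⊆ A ∧
      v = if ∃ a, a ∈ A ∧ sstar a ∈ A ∧ (I ∪ {a}) ∈ Iad M ∧ (I ∪ {sstar a}) ∈ Iad M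
        then I.ncard + 2 else I.ncard} := by
  rw [hM.2.2 A]
  refine Nat.sSup_mem ⟨_, ∅, M.empty_indep, admissible_empty, Set.empty_subset A, rfl⟩ ?_
  refine ((Set.finite_range fun I : Set (J n) => I.ncard + 2).union
    (Set.finite_range (Set.ncard (α := J n)))).bddAbove.mono ?_
  rintro _ ⟨I, -, -, -, rfl⟩
  split_ifs
  exacts [Or.inl ⟨I, rfl⟩, Or.inr ⟨I, rfl⟩]

lemma IsAdmissibleMatroid.admissible_closure_insert_sstar (hM : IsAdmissibleMatroid M)
    {x : Set (J n)} (hx : M.IsFlat x) {a : J n} (ha : a ∉ x) (ha' : sstar a ∉ x)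
    (hG : Admissible (M.closure (insert a x))) :
    Admissible (M.closure (insert (sstar a) x)) := by
  have hE := hM.1
  have hsub_cl : ∀ X : Set (J n), X ⊆ M.closure X := fun X => M.subset_closure X (by simp [hE])
  have ha'G : sstar a ∉ M.closure (insert a x) :=
    hG.sstar_notMem (hsub_cl _ (Set.mem_insert a x))
  have hxadm : Admissible x := hG.subset ((Set.subset_insert a x).trans (hsub_cl _))
  have hrank : M.rSet (insert (sstar a) (insert a x)) = M.rSet x + 2 := by
    rw [rSet_insert_of_notMem_closure ⟨by simp [hE], ha'G⟩,
      rSet_insert_of_notMem_closure ⟨by simp [hE], by rwa [hx.closure]⟩]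
  obtain ⟨I, hI, hIadm, hIA, hval⟩ := hM.exists_indep_rSet_eq (insert (sstar a) (insert a x))
  split_ifs at hval with hpair
  · obtain ⟨b, hb, hb', hIb, hIb'⟩ := hpair
    have hIa : I ∪ {a} ∈ Iad M ∧ I ∪ {sstar a} ∈ Iad M := by
      rcases hxadm.eq_sstar_or_eq_of_mem_insert_insert ha ha' hb hb' with rfl | rfl
      · rw [sstar_sstar] at hIb'
        exact ⟨hIb', hIb⟩
      · exact ⟨hIb, hIb'⟩
    obtain ⟨⟨-, hadm_a⟩, hind, hadm⟩ := hIa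
    have haI : a ∉ I := fun h =>
      hadm.sstar_notMem (hsub_cl _ (Or.inl h)) (hsub_cl _ (Or.inr rfl))
    have ha'I : sstar a ∉ I := fun h =>
      hadm_a.sstar_notMem (hsub_cl _ (Or.inr rfl)) (hsub_cl _ (Or.inl h))
    have hIx : I ⊆ x := by
      rwa [Set.subset_insert_iff_of_notMem ha'I, Set.subset_insert_iff_of_notMem haI] at hIA
    have hrank' : M.rSet (insert (sstar a) x) = M.rSet x + 1 :=
      rSet_insert_of_notMem_closure ⟨by simp [hE], by rwa [hx.closure]⟩
    rw [Set.union_singleton] at hind hadm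
    have hcl : M.closure (insert (sstar a) I) = M.closure (insert (sstar a) x) :=
      hind.closure_eq_of_rSet_le (Set.insert_subset_insert hIx)
        (by rw [Set.ncard_insert_of_notMem ha'I, hrank']; omega)
    rwa [hcl] at hadm
  · have hIle : I.ncard ≤ M.rSet x + 1 := by
      by_cases haI : a ∈ I
      · rw [Set.subset_insert_iff_of_notMem (hIadm.sstar_notMem haI)] at hIA
        exact (hI.ncard_le_rSet hIA).trans (M.rSet_insert_le a x)
      · rw [Set.insert_comm, Set.subset_insert_iff_of_notMem haI] at hIA
        exact (hI.ncard_le_rSet hIA).trans (M.rSet_insert_le _ x)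
    omega

lemma IsAdmissibleMatroid.notMem_and_admissible_closure_insert_iff
    (hM : IsAdmissibleMatroid M) {x : Set (J n)} (hx : M.IsFlat x)
    (b : J n) :
    (b ∉ x ∧ Admissible (M.closure (insert b x))) ↔
      (sstar b ∉ x ∧ Admissible (M.closure (insert (sstar b) x))) := by
  suffices h : ∀ c, c ∉ x ∧ Admissible (M.closure (insert c x)) →
      sstar c ∉ x ∧ Admissible (M.closure (insert (sstar c) x)) from
    ⟨h b, fun hb => sstar_sstar b ▸ h (sstar b) hb⟩
  rintro c ⟨hc, hG⟩
  have hsub : insert c x ⊆ M.closure (insert c x) := M.subset_closure _ (by simp [hM.1])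
  have hc' : sstar c ∉ x := fun h =>
    hG.sstar_notMem (hsub (Set.mem_insert c x)) (hsub (Set.mem_insert_of_mem c h))
  exact ⟨hc', hM.admissible_closure_insert_sstar hx hc hc' hG⟩

end AdmissibleMatroid

lemma IsBot.sum_mob_le {α : Type*} [PartialOrder α] [Fintype α] {b : α} (hb : IsBot b)
    (z : α) :
    ∑ y ∈ Finset.univ.filter (· ≤ z), mob b y = if b = z then 1 else 0 := by
  let := Fintype.toLocallyFiniteOrder (α := α)
  convert IncidenceAlgebra.sum_Icc_mu_right (𝕜 := ℤ) b z using 2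
  · ext y
    simp [hb y]
  · rfl

section Mobius

variable {n : ℕ} {M : Matroid (J n)}

lemma sum_muFlats_subset_eq_zero (h0 : M.IsFlat ∅) {F : Set (J n)} (hF : M.IsFlat F)
    (hne : F.Nonempty) :
    ∑ x ∈ Finset.univ.filter (fun x => M.IsFlat x ∧ x ⊆ F), muFlats M ∅ x = 0 := by
  let Fl : {X : Set (J n) // M.IsFlat X} := ⟨F, hF⟩
  have h := IsBot.sum_mob_le (b := (⟨∅, h0⟩ : {X : Set (J n) // M.IsFlat X}))
    (fun y => Set.empty_subset y.1) Fl
  rw [if_neg fun h => hne.ne_empty (congrArg Subtype.val h).symm] at h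
  calc ∑ x ∈ Finset.univ.filter (fun x => M.IsFlat x ∧ x ⊆ F), muFlats M ∅ x
      = ∑ x ∈ (Finset.univ.filter (· ≤ Fl)).map (Function.Embedding.subtype _),
          muFlats M ∅ x := by
        refine Finset.sum_congr ?_ fun _ _ => rfl
        ext x
        simp [Fl, and_comm]
    _ = ∑ y ∈ Finset.univ.filter (· ≤ Fl), mob ⟨∅, h0⟩ y := by
      rw [Finset.sum_map]
      exact Finset.sum_congr rfl fun y _ => by simp [muFlats, h0, y.2]
    _ = 0 := h

-- Weisner's theorem for the atom `cl {b}` of the lattice of flats.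
lemma sum_muFlats_closure_insert_eq_zero (h0 : M.IsFlat ∅) {b : J n} (hb : b ∈ M.E)
    {F : Set (J n)} (hF : M.IsFlat F) (hbF : b ∈ F) :
    ∑ x ∈ Finset.univ.filter (fun x => M.IsFlat x ∧ M.closure (insert b x) = F),
      muFlats M ∅ x = 0 := by
  induction F using WellFoundedLT.induction with
  | ind F IH =>
  have hsub : ∀ x, M.IsFlat x → insert b x ⊆ M.closure (insert b x) := fun x hx =>
    M.subset_closure _ (Set.insert_subset hb hx.subset_ground)
  have hfibers : ∀ y ∈ Finset.univ.filter (fun y => M.IsFlat y ∧ y ⊆ F ∧ b ∈ y),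
      ∑ x ∈ Finset.univ.filter (fun x => M.IsFlat x ∧ x ⊆ F) with M.closure (insert b x) = y,
        muFlats M ∅ x =
      ∑ x ∈ Finset.univ.filter (fun x => M.IsFlat x ∧ M.closure (insert b x) = y),
        muFlats M ∅ x := by
    intro y hy
    refine Finset.sum_congr ?_ fun _ _ => rfl
    ext x
    simp only [Finset.mem_filter, Finset.mem_univ, true_and] at hy ⊢
    refine ⟨fun ⟨⟨hx, _⟩, hxy⟩ => ⟨hx, hxy⟩, fun ⟨hx, hxy⟩ => ⟨⟨hx, ?_⟩, hxy⟩⟩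
    exact (Set.subset_insert b x).trans ((hsub x hx).trans (hxy ▸ hy.2.1))
  have hmaps : ∀ x ∈ Finset.univ.filter (fun x => M.IsFlat x ∧ x ⊆ F),
      M.closure (insert b x) ∈ Finset.univ.filter (fun y => M.IsFlat y ∧ y ⊆ F ∧ b ∈ y) := by
    intro x hx
    simp only [Finset.mem_filter, Finset.mem_univ, true_and] at hx ⊢
    refine ⟨M.isFlat_closure _, ?_, hsub x hx.1 (Set.mem_insert b x)⟩
    exact (M.closure_subset_closure (Set.insert_subset hbF hx.2)).trans hF.closure.subset
  have h := sum_muFlats_subset_eq_zero h0 hF ⟨b, hbF⟩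
  rw [← Finset.sum_fiberwise_of_maps_to hmaps, Finset.sum_congr rfl hfibers,
    Finset.sum_eq_single_of_mem F (by simp [hF, hbF])] at h
  · exact h
  · intro y hy hyF
    simp only [Finset.mem_filter, Finset.mem_univ, true_and] at hy
    exact IH y (lt_of_le_of_ne hy.2.1 hyF) hy.1 hy.2.2

lemma muFlats_eq_neg_sum_closure_insert (h0 : M.IsFlat ∅) {b : J n} (hb : b ∈ M.E)
    {F : Set (J n)} (hF : M.IsFlat F) (hbF : b ∈ F) :
    muFlats M ∅ F = -∑ x ∈ Finset.univ.filter (fun x => M.IsFlat x ∧ b ∉ x)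
      with M.closure (insert b x) = F, muFlats M ∅ x := by
  have h := sum_muFlats_closure_insert_eq_zero h0 hb hF hbF
  have hsplit : Finset.univ.filter (fun x => M.IsFlat x ∧ M.closure (insert b x) = F) =
      insert F ((Finset.univ.filter fun x => M.IsFlat x ∧ b ∉ x).filter
        fun x => M.closure (insert b x) = F) := by
    ext x
    simp only [Finset.mem_insert, Finset.mem_filter, Finset.mem_univ, true_and]
    constructor
    · rintro ⟨hx, rfl⟩
      by_cases hbx : b ∈ x
      · rw [Set.insert_eq_of_mem hbx, hx.closure]
        exact Or.inl rfl
      · exact Or.inr ⟨⟨hx, hbx⟩, rfl⟩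
    · rintro (rfl | ⟨⟨hx, -⟩, hxF⟩)
      · exact ⟨hF, by rw [Set.insert_eq_of_mem hbF, hF.closure]⟩
      · exact ⟨hx, hxF⟩
  rw [hsplit, Finset.sum_insert (by simp [hbF])] at h
  exact eq_neg_of_add_eq_zero_left h

lemma IsAdmissibleMatroid.sum_muFlats_eq_neg_sum (hM : IsAdmissibleMatroid M) (b : J n)
    (k : ℕ) :
    ∑ F ∈ Finset.univ.filter
        (fun F : Set (J n) => M.IsFlat F ∧ Admissible F ∧ M.rSet F = k ∧ b ∈ F),
      muFlats M ∅ F =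
    -∑ x ∈ Finset.univ.filter (fun x : Set (J n) => M.IsFlat x ∧
        (b ∉ x ∧ Admissible (M.closure (insert b x))) ∧ M.rSet x + 1 = k),
      muFlats M ∅ x := by
  have hb : b ∈ M.E := by simp [hM.1]
  have h0 : M.IsFlat ∅ := hM.2.1.isFlat_empty
  rw [Finset.sum_congr rfl fun F hF => muFlats_eq_neg_sum_closure_insert h0 hb
      (Finset.mem_filter.1 hF).2.1 (Finset.mem_filter.1 hF).2.2.2.2,
    Finset.sum_neg_distrib, Finset.sum_fiberwise_eq_sum_filter, Finset.filter_filter]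
  congr 2
  refine Finset.filter_congr fun x _ => ?_
  simp only [Finset.mem_filter, Finset.mem_univ, true_and]
  constructor
  · rintro ⟨⟨hx, hbx⟩, -, hadm, hrk, -⟩
    exact ⟨hx, ⟨hbx, hadm⟩, (hx.rSet_closure_insert hb hbx).symm.trans hrk⟩
  · rintro ⟨hx, ⟨hbx, hadm⟩, hrk⟩
    exact ⟨⟨hx, hbx⟩, M.isFlat_closure _, hadm, (hx.rSet_closure_insert hb hbx).trans hrk,
      M.subset_closure _ (by simp [hM.1]) (Set.mem_insert b x)⟩

end Mobius

theorem stmt_7_general (n : ℕ) (M : Matroid (J n)) (hM : IsAdmissibleMatroid M)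
    (a : J n) (k : ℕ) :
    ∑ F ∈ Finset.univ.filter
        (fun F : Set (J n) => M.IsFlat F ∧ Admissible F ∧ M.rSet F = k ∧ a ∈ F),
      muFlats M ∅ F =
    ∑ F ∈ Finset.univ.filter
        (fun F : Set (J n) => M.IsFlat F ∧ Admissible F ∧ M.rSet F = k ∧ sstar a ∈ F),
      muFlats M ∅ F := by
  rw [hM.sum_muFlats_eq_neg_sum a k, hM.sum_muFlats_eq_neg_sum (sstar a) k]
  congr 2
  exact Finset.filter_congr fun x _ => and_congr_right fun hx => by
    rw [hM.notMem_and_admissible_closure_insert_iff hx a]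

theorem stmt_7 (n : ℕ) (hn : 1 ≤ n) (M : Matroid (J n)) (hM : IsAdmissibleMatroid M)
    (a : J n) (k : ℕ) :
    ∑ F ∈ Finset.univ.filter
        (fun F : Set (J n) => M.IsFlat F ∧ Admissible F ∧ M.rSet F = k ∧ a ∈ F),
      muFlats M ∅ F =
    ∑ F ∈ Finset.univ.filter
        (fun F : Set (J n) => M.IsFlat F ∧ Admissible F ∧ M.rSet F = k ∧ sstar a ∈ F),
      muFlats M ∅ F :=
  stmt_7_general n M hM a k
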